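/- For every integer k ≥ 2, h(k) ≥ 2·p_{k−1}, where h(k) = g(p_k#) is the Jacobsthal function of the k-th primorial and p_{k−1} is the (k−1)-st prime. -/

import Mathlib

/-- The `k`-th primorial': product of the first `k` primes. -/
noncomputable def primorial' (k : ℕ) : ℕ := ∏ i ∈ Finset.range k, Nat.nth Nat.Prime i

/-- The ordinary Jacobsthal function. -/
noncomputable def jacobsthal (n : ℕ) : ℕ :=
  sInf {m : ℕ | 0 < m ∧ ∀ a : ℤ, ∃ i : ℕ, i < m ∧ Int.gcd (a + i) n = 1}

lemma jac_nonempty (n : ℕ) (hn : 0 < n) :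
    Set.Nonempty {m : ℕ | 0 < m ∧ ∀ a : ℤ, ∃ i : ℕ, i < m ∧ Int.gcd (a + i) n = 1} := by
  refine ⟨n, hn, fun a => ?_⟩
  have h1 : (0:ℤ) < n := by exact_mod_cast hn
  have h0 : 0 ≤ (1 - a) % n := Int.emod_nonneg _ (ne_of_gt h1)
  have h2 : (1 - a) % n < n := Int.emod_lt_of_pos _ h1
  refine ⟨((1 - a) % n).toNat, by omega, ?_⟩
  rw [Int.toNat_of_nonneg h0, ← Int.isCoprime_iff_gcd_eq_one]
  refine ⟨1, (1 - a) / n, ?_⟩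
  have := Int.emod_add_mul_ediv (1 - a) n
  nlinarith [this]

lemma exists_nth_eq {p K : ℕ} (hp : p.Prime) (h : p < Nat.nth Nat.Prime K) :
    ∃ i < K, Nat.nth Nat.Prime i = p := by
  refine ⟨Nat.count Nat.Prime p, ?_, Nat.nth_count hp⟩
  by_contra hle
  push_neg at hle
  have h2 := Nat.nth_monotone Nat.infinite_setOf_prime hle
  rw [Nat.nth_count hp] at h2
  exact absurd h (not_lt.2 h2)

lemma nth_dvd_primorial {i k : ℕ} (h : i < k) : Nat.nth Nat.Prime i ∣ primorial' k :=
  Finset.dvd_prod_of_mem _ (Finset.mem_range.mpr h)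

lemma coprime_nth {i j : ℕ} (h : i ≠ j) :
    (Nat.nth Nat.Prime i).Coprime (Nat.nth Nat.Prime j) :=
  (Nat.coprime_primes (Nat.prime_nth_prime i) (Nat.prime_nth_prime j)).mpr
    fun e => h (Nat.nth_injective Nat.infinite_setOf_prime e)

lemma primorial'_pos (k : ℕ) : 0 < primorial' k :=
  Finset.prod_pos fun i _ => (Nat.prime_nth_prime i).pos

theorem jacobsthal_primorial_lower_bound (k : ℕ) (hk : 2 ≤ k) :
    2 * Nat.nth Nat.Prime (k - 2) ≤ jacobsthal (primorial' k) := by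
  rcases eq_or_lt_of_le hk with hk2 | hk3
  · -- k = 2 : show 4 ≤ jacobsthal 6
    subst hk2
    have hP6 : primorial' 2 = 6 := by
      simp [primorial', Finset.prod_range_succ, Nat.nth_prime_zero_eq_two,
        Nat.nth_prime_one_eq_three]
    rw [hP6, show (2:ℕ) - 2 = 0 from rfl, Nat.nth_prime_zero_eq_two]
    apply le_csInf (by rw [← hP6]; exact jac_nonempty _ (primorial'_pos 2))
    rintro m ⟨hm0, hm⟩
    by_contra hlt
    push_neg at hlt
    obtain ⟨i, hi, hg⟩ := hm 2
    have hi3 : i < 3 := by omega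
    interval_cases i <;> simp_all [Int.gcd]
  · -- k ≥ 3
    have hk3 : 3 ≤ k := hk3
    set P := primorial' k with hP
    set q := Nat.nth Nat.Prime (k - 2) with hq
    set r := Nat.nth Nat.Prime (k - 1) with hr
    have hq2 : 2 ≤ q := (Nat.prime_nth_prime _).two_le
    have hr2 : 2 ≤ r := (Nat.prime_nth_prime _).two_le
    have hqr : q.Coprime r := coprime_nth (by omega)
    have hqP : q ∣ P := nth_dvd_primorial (by omega)
    have hrP : r ∣ P := nth_dvd_primorial (by omega)
    set M := primorial' (k - 2) with hM
    have hMP : M ∣ P :=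
      Finset.prod_dvd_prod_of_subset _ _ _ (Finset.range_subset_range.mpr (by omega))
    have hMq : M.Coprime q :=
      Nat.Coprime.prod_left fun i hi => coprime_nth (Finset.mem_range.mp hi).ne
    have hMr : M.Coprime r :=
      Nat.Coprime.prod_left fun i hi => coprime_nth
        (by have := Finset.mem_range.mp hi; omega)
    obtain ⟨N1, hN1q, hN1r⟩ := Nat.chineseRemainder hqr 1 (r - 1)
    obtain ⟨N, hNqr, hNM⟩ := Nat.chineseRemainder ((hMq.mul_right hMr).symm) N1 0
    have hNq : (q:ℤ) ∣ (N:ℤ) - 1 := by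
      have h1 : N ≡ 1 [MOD q] := (hNqr.of_dvd (dvd_mul_right q r)).trans hN1q
      simpa using (Nat.ModEq.dvd h1.symm)
    have hNr : (r:ℤ) ∣ (N:ℤ) + 1 := by
      have h1 : N ≡ r - 1 [MOD r] := (hNqr.of_dvd (dvd_mul_left r q)).trans hN1r
      have h2 := Nat.ModEq.dvd h1.symm
      have hc : ((r - 1 : ℕ) : ℤ) = (r : ℤ) - 1 := by
        rw [Nat.cast_sub (by omega : 1 ≤ r)]; norm_num
      rw [hc] at h2
      obtain ⟨t, ht⟩ := h2
      exact ⟨t + 1, by linarith⟩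
    have hNM' : (M:ℤ) ∣ (N:ℤ) := by
      have := (Nat.modEq_zero_iff_dvd).mp hNM
      exact_mod_cast Int.natCast_dvd_natCast.mpr this
    apply le_csInf (jac_nonempty P (primorial'_pos k))
    rintro m ⟨hm0, hm⟩
    by_contra hlt
    push_neg at hlt
    obtain ⟨i, hi, hg⟩ := hm ((N:ℤ) - (q - 1))
    set j : ℤ := (i : ℤ) - (q - 1) with hj
    have hjlb : -((q:ℤ) - 1) ≤ j := by rw [hj]; omega
    have hjub : j ≤ (q:ℤ) - 1 := by rw [hj]; omega
    have hsum : (N:ℤ) - (q - 1) + i = (N:ℤ) + j := by rw [hj]; ring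
    rw [hsum] at hg
    have hco : IsCoprime ((N:ℤ) + j) (P:ℤ) := Int.isCoprime_iff_gcd_eq_one.mpr hg
    have key : ∃ p : ℕ, p.Prime ∧ (p:ℤ) ∣ (N:ℤ) + j ∧ p ∣ P := by
      rcases eq_or_ne j 0 with h0 | h0
      · have h2M : 2 ∣ M := by
          have := nth_dvd_primorial (i := 0) (k := k - 2) (by omega)
          rwa [Nat.nth_prime_zero_eq_two] at this
        refine ⟨2, Nat.prime_two, ?_, dvd_trans h2M hMP⟩
        rw [h0, add_zero]
        exact dvd_trans (by exact_mod_cast Int.natCast_dvd_natCast.mpr h2M) hNM'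
      rcases eq_or_ne j (-1) with h1 | h1
      · exact ⟨q, Nat.prime_nth_prime _, by rw [h1, ← sub_eq_add_neg]; exact hNq, hqP⟩
      rcases eq_or_ne j 1 with h1' | h1'
      · exact ⟨r, Nat.prime_nth_prime _, by rw [h1']; exact hNr, hrP⟩
      · have habs : 2 ≤ j.natAbs := by omega
        set p := j.natAbs.minFac with hp
        have hpp : p.Prime := Nat.minFac_prime (by omega)
        have hpj : (p:ℤ) ∣ j :=
          dvd_trans (Int.natCast_dvd_natCast.mpr (Nat.minFac_dvd _))
            (Int.natAbs_dvd.mpr dvd_rfl)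
        have hplt : p < q := by
          have h1 : p ≤ j.natAbs := Nat.minFac_le (by omega)
          have h2 : j.natAbs ≤ q - 1 := by omega
          omega
        obtain ⟨i0, hi0, hi0e⟩ := exists_nth_eq hpp hplt
        have hpM : p ∣ M := hi0e ▸ nth_dvd_primorial hi0
        refine ⟨p, hpp, ?_, dvd_trans hpM hMP⟩
        exact dvd_add (dvd_trans (Int.natCast_dvd_natCast.mpr hpM) hNM') hpj
    obtain ⟨p, hpp, hpd, hpP⟩ := key
    have hu : IsUnit (p:ℤ) := hco.isUnit_of_dvd' hpd (Int.natCast_dvd_natCast.mpr hpP)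
    rw [Int.isUnit_iff] at hu
    have := hpp.two_le
    omega
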